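/- There exists a universal constant c > 0 such that the following holds. Let p and q be reals with 2 ≤ p < q, let C ≥ 1 and α > 1, let A ∈ ℝ^{n×m} and b ∈ ℝ^n. Suppose x₀ satisfies Ax₀ = b and ‖x₀‖_q^q ≤ C·‖x‖_q^q for every x with Ax = b; suppose the minimum of ‖x‖_p^p over {x : Ax = b} is attained at x*, and ‖x₀‖_p^p > α‖x*‖_p^p. Define the residual at x₀ by g_e = |x₀ₑ|^{p−2}x₀ₑ and r_e = |x₀ₑ|^{p−2}. Then c·(α−1)·‖x₀‖_p^p / (C^{p/q} · p · m) ≤ sup{res_p(Δ) : AΔ = 0} ≤ ‖x₀‖_p^p. -/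

import Mathlib

/-!
The upper bound holds coordinatewise: `|x|^(p-2) x Δ ≤ max(|x|, |Δ|)^p ≤ |x|^p + |Δ|^p`.

For the lower bound take the kernel direction `Δ = (x₀ - x*)/16`. Scaling to `x = 1` and applying
Bernoulli's inequality to `(1 + t)^(p/2)` gives the strengthened convexity estimate
`|x + δ|^p ≥ |x|^p + p |x|^(p-2) x δ + (p/8) |x|^(p-2) δ² + (|δ|/2)^p / 2`; with `δ = x* - x₀` it
shows, coordinate by coordinate, `res_p(Δ) ≥ (‖x₀‖_p^p - ‖x*‖_p^p) / (16 p)`. The near-optimality of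
`x₀` for `‖·‖_q` and the comparison of `ℓ_p` and `ℓ_q` norms give `‖x₀‖_p^p ≤ m C^(p/q) ‖x*‖_p^p`,
which together with `‖x₀‖_p^p > α ‖x*‖_p^p` bounds the gap `‖x₀‖_p^p - ‖x*‖_p^p` from below by
`(α - 1) ‖x₀‖_p^p / (m C^(p/q))`. Hence `c = 1/16`.
-/

open Real Finset

/-- The residual objective `res_p(Δ) = g^⊤Δ − 2∑_e w_e Δ_e² − ‖Δ‖_p^p`. -/
noncomputable def res {m : ℕ} (g w : Fin m → ℝ) (p : ℝ) (Δ : Fin m → ℝ) : ℝ :=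
  (∑ e, g e * Δ e) - 2 * (∑ e, w e * Δ e ^ 2) - ∑ e, |Δ e| ^ p

section Pointwise

variable {p : ℝ}

lemma sq_one_add_mul_le_rpow (hp : 2 ≤ p) {s : ℝ} (hs : -1 ≤ s) (h : 0 ≤ 1 + p / 2 * s) :
    (1 + p / 2 * s) ^ 2 ≤ (1 + s) ^ p := by
  have hB : 1 + p / 2 * s ≤ (1 + s) ^ (p / 2) :=
    one_add_mul_self_le_rpow_one_add hs (by linarith)
  calc (1 + p / 2 * s) ^ 2 ≤ ((1 + s) ^ (p / 2)) ^ 2 := pow_le_pow_left₀ h hB 2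
    _ = (1 + s) ^ p := by rw [← rpow_natCast, ← rpow_mul (by linarith)]; norm_num

lemma rpow_le_sq_of_le_one (hp : 2 ≤ p) {s : ℝ} (hs0 : 0 ≤ s) (hs1 : s ≤ 1) : s ^ p ≤ s ^ 2 := by
  simpa using rpow_le_rpow_of_exponent_ge' hs0 hs1 zero_le_two hp

lemma abs_rpow_sub_two_mul_sq (hp : p ≠ 0) (x : ℝ) : |x| ^ (p - 2) * x ^ 2 = |x| ^ p := by
  rw [← sq_abs, ← rpow_two, ← rpow_add' (abs_nonneg x) (by simpa using hp), sub_add_cancel]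

lemma one_add_rpow_lower_of_nonneg (hp : 2 ≤ p) {t : ℝ} (ht : 0 ≤ t) :
    1 + p * t + p / 8 * t ^ 2 + (t / 2) ^ p / 2 ≤ (1 + t) ^ p := by
  have hA₁ : 1 + p / 2 * t ≤ (1 + t) ^ (p / 2) :=
    one_add_mul_self_le_rpow_one_add (by linarith) (by linarith)
  have hA₂ : 1 + t ^ (p / 2) ≤ (1 + t) ^ (p / 2) := by
    simpa using add_rpow_le_rpow_add zero_le_one ht (show 1 ≤ p / 2 by linarith)
  have hsq : ∀ {a : ℝ}, 0 ≤ a → (a ^ (p / 2)) ^ 2 = a ^ p := fun ha => by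
    rw [← rpow_natCast, ← rpow_mul ha]; norm_num
  have hhalf : (t / 2) ^ p ≤ t ^ p := rpow_le_rpow (by positivity) (by linarith) (by linarith)
  have hB : 0 ≤ t ^ (p / 2) := rpow_nonneg ht _
  rw [← hsq (by linarith : (0:ℝ) ≤ 1 + t)]
  rw [← hsq ht] at hhalf
  have hquad : p / 8 * t ^ 2 ≤ (p / 2 * t) ^ 2 / 2 := by
    nlinarith [mul_nonneg (by linarith : (0:ℝ) ≤ p)
      (mul_nonneg (by linarith : (0:ℝ) ≤ p - 1) (sq_nonneg t))]
  -- `(1+t)^(p/2) ≥ 1 + max(p t / 2, t^(p/2))`, and the square of the max dominates the mean square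
  rcases le_total (p / 2 * t) (t ^ (p / 2)) with h | h
  · nlinarith [pow_le_pow_left₀ (by positivity) hA₂ 2, pow_le_pow_left₀ (by positivity) h 2]
  · nlinarith [pow_le_pow_left₀ (by positivity) hA₁ 2, pow_le_pow_left₀ hB h 2]

lemma one_sub_rpow_lower (hp : 2 ≤ p) {u : ℝ} (hu : 0 ≤ u) :
    1 - p * u + p / 8 * u ^ 2 + (u / 2) ^ p / 2 ≤ |1 - u| ^ p := by
  rcases le_or_gt u 2 with hu2 | hu2
  · have hsmall : (u / 2) ^ p ≤ (u / 2) ^ 2 :=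
      rpow_le_sq_of_le_one hp (by positivity) (by linarith)
    rcases le_or_gt (p * u) 2 with hpu | hpu
    · have hB := sq_one_add_mul_le_rpow hp (s := -u) (by nlinarith) (by nlinarith)
      rw [abs_of_nonneg (by nlinarith : 0 ≤ 1 - u), ← sub_eq_add_neg] at *
      nlinarith [mul_nonneg (by nlinarith : (0:ℝ) ≤ p ^ 2 / 4 - p / 8 - 1 / 8) (sq_nonneg u)]
    · -- here the left-hand side is negative
      nlinarith [rpow_nonneg (abs_nonneg (1 - u)) p, mul_nonneg hu (by linarith : (0:ℝ) ≤ 2 - u)]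
  · have hhalf : (u / 2) ^ p ≤ (u - 1) ^ p :=
      rpow_le_rpow (by positivity) (by linarith) (by linarith)
    have hB := sq_one_add_mul_le_rpow hp (s := u - 2) (by linarith) (by nlinarith)
    rw [abs_of_neg (by linarith : 1 - u < 0), neg_sub]
    rw [show 1 + (u - 2) = u - 1 by ring] at hB
    nlinarith [mul_nonneg (by linarith : (0:ℝ) ≤ p - 1) (sq_nonneg (u - 2)),
      mul_nonneg (by linarith : (0:ℝ) ≤ p) (by linarith : (0:ℝ) ≤ u - 2)]

lemma one_add_rpow_lower (hp : 2 ≤ p) (t : ℝ) :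
    1 + p * t + p / 8 * t ^ 2 + (|t| / 2) ^ p / 2 ≤ |1 + t| ^ p := by
  rcases le_total 0 t with ht | ht
  · rw [abs_of_nonneg ht, abs_of_nonneg (by linarith)]
    exact one_add_rpow_lower_of_nonneg hp ht
  · have := one_sub_rpow_lower hp (neg_nonneg.mpr ht)
    simpa [abs_of_nonpos ht] using this

lemma thirty_two_mul_le_eight_rpow (hp : 2 ≤ p) : 32 * p ≤ (8 : ℝ) ^ p := by
  have h := one_add_mul_self_le_rpow_one_add (by norm_num : (-1 : ℝ) ≤ 7) (by linarith : 1 ≤ p - 1)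
  rw [rpow_sub_one (by norm_num)] at h
  norm_num at h
  linarith

lemma abs_add_rpow_lower (hp : 2 ≤ p) (x δ : ℝ) :
    |x| ^ p + p * (|x| ^ (p - 2) * x) * δ + p / 8 * (|x| ^ (p - 2) * δ ^ 2) + (|δ| / 2) ^ p / 2
      ≤ |x + δ| ^ p := by
  rcases eq_or_ne x 0 with rfl | hx
  · have hhalf : (|δ| / 2) ^ p ≤ |δ| ^ p :=
      rpow_le_rpow (by positivity) (by linarith [abs_nonneg δ]) (by linarith)
    obtain rfl | hp2 := hp.eq_or_lt
    · norm_num at hhalf ⊢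
      nlinarith [sq_nonneg δ]
    · simp [zero_rpow (by linarith : p ≠ 0), zero_rpow (by linarith : p - 2 ≠ 0)]
      linarith [rpow_nonneg (abs_nonneg δ) p]
  · obtain ⟨t, rfl⟩ : ∃ t, δ = t * x := ⟨δ / x, (div_mul_cancel₀ δ hx).symm⟩
    have hxp := abs_rpow_sub_two_mul_sq (by linarith : p ≠ 0) x
    have h1 := mul_le_mul_of_nonneg_left (one_add_rpow_lower hp t) (rpow_nonneg (abs_nonneg x) p)
    rw [show x + t * x = x * (1 + t) by ring, abs_mul x, abs_mul t, mul_div_right_comm,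
      mul_rpow (abs_nonneg _) (abs_nonneg _), mul_rpow (by positivity) (abs_nonneg _)]
    calc _ = |x| ^ p * (1 + p * t + p / 8 * t ^ 2 + (|t| / 2) ^ p / 2) := by
          rw [← hxp]; ring
      _ ≤ _ := h1

lemma abs_rpow_sub_le_res_term (hp : 2 ≤ p) (x y : ℝ) :
    (|x| ^ p - |y| ^ p) / (16 * p)
      ≤ |x| ^ (p - 2) * x * (16⁻¹ * (x - y)) - 2 * (|x| ^ (p - 2) * (16⁻¹ * (x - y)) ^ 2)
        - |16⁻¹ * (x - y)| ^ p := by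
  have key := abs_add_rpow_lower hp x (y - x)
  rw [add_sub_cancel, abs_sub_comm] at key
  set K := (|x - y| / 2) ^ p
  have hK : 0 ≤ K := by positivity
  have h8 : |16⁻¹ * (x - y)| ^ p = K / 8 ^ p := by
    rw [abs_mul, show |(16:ℝ)⁻¹| * |x - y| = |x - y| / 2 / 8 by norm_num; ring,
      div_rpow (by positivity) (by norm_num)]
  have h32 : K / 8 ^ p ≤ K / (32 * p) :=
    div_le_div_of_nonneg_left hK (by positivity) (thirty_two_mul_le_eight_rpow hp)
  have h16 : K / 8 ^ p * (16 * p) ≤ K / 2 := by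
    calc K / 8 ^ p * (16 * p) ≤ K / (32 * p) * (16 * p) :=
          mul_le_mul_of_nonneg_right h32 (by positivity)
      _ = K / 2 := by field_simp; ring
  rw [h8, div_le_iff₀ (by positivity)]
  linear_combination key + h16

lemma res_term_le_abs_rpow (hp : 2 ≤ p) (x d : ℝ) :
    |x| ^ (p - 2) * x * d - 2 * (|x| ^ (p - 2) * d ^ 2) - |d| ^ p ≤ |x| ^ p := by
  set M := max |x| |d|
  have hM : 0 ≤ M := le_max_of_le_left (abs_nonneg x)
  have hlin : |x| ^ (p - 2) * x * d ≤ M ^ p := by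
    calc |x| ^ (p - 2) * x * d ≤ |x| ^ (p - 2) * |x| * |d| := by
          rw [mul_assoc, mul_assoc, ← abs_mul]
          exact mul_le_mul_of_nonneg_left (le_abs_self _) (rpow_nonneg (abs_nonneg x) _)
      _ ≤ M ^ (p - 2) * M * M := by
          gcongr
          exacts [le_max_left _ _, le_max_left _ _, le_max_right _ _]
      _ = M ^ p := by
          have h := abs_rpow_sub_two_mul_sq (by linarith : p ≠ 0) M
          rwa [abs_of_nonneg hM, sq, ← mul_assoc] at h
  have hmax : M ^ p ≤ |x| ^ p + |d| ^ p := by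
    rcases max_choice |x| |d| with h | h <;> simp only [M, h] <;>
      linarith [rpow_nonneg (abs_nonneg x) p, rpow_nonneg (abs_nonneg d) p]
  nlinarith [rpow_nonneg (abs_nonneg x) (p - 2), sq_nonneg d]

end Pointwise

lemma res_le_sum_abs_rpow {m : ℕ} {p : ℝ} (hp : 2 ≤ p) (x Δ : Fin m → ℝ) :
    res (fun e => |x e| ^ (p - 2) * x e) (fun e => |x e| ^ (p - 2)) p Δ ≤ ∑ e, |x e| ^ p := by
  rw [res, mul_sum, ← sum_sub_distrib, ← sum_sub_distrib]
  exact sum_le_sum fun e _ => res_term_le_abs_rpow hp (x e) (Δ e)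

lemma sum_abs_rpow_sub_le_res {m : ℕ} {p : ℝ} (hp : 2 ≤ p) (x y : Fin m → ℝ) :
    (∑ e, |x e| ^ p - ∑ e, |y e| ^ p) / (16 * p)
      ≤ res (fun e => |x e| ^ (p - 2) * x e) (fun e => |x e| ^ (p - 2)) p
          ((16 : ℝ)⁻¹ • (x - y)) := by
  rw [res, mul_sum, ← sum_sub_distrib, ← sum_sub_distrib, ← sum_sub_distrib, sum_div]
  exact sum_le_sum fun e _ => abs_rpow_sub_le_res_term hp (x e) (y e)

section PowerSums

variable {ι : Type*} (s : Finset ι) {f : ι → ℝ}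

lemma sum_rpow_le_card_mul_rpow_sum (hf : ∀ i ∈ s, 0 ≤ f i) {r : ℝ} (hr : 0 ≤ r) :
    ∑ i ∈ s, f i ^ r ≤ s.card * (∑ i ∈ s, f i) ^ r := by
  rw [← nsmul_eq_mul, ← sum_const]
  exact sum_le_sum fun i hi => rpow_le_rpow (hf i hi) (single_le_sum hf hi) hr

lemma sum_rpow_le_rpow_sum (hf : ∀ i ∈ s, 0 ≤ f i) {r : ℝ} (hr : 1 ≤ r) :
    ∑ i ∈ s, f i ^ r ≤ (∑ i ∈ s, f i) ^ r := by
  classical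
  induction s using Finset.induction_on with
  | empty => simp [zero_rpow (by linarith : r ≠ 0)]
  | insert a s ha ih =>
    rw [sum_insert ha, sum_insert ha]
    have hs := forall_mem_insert _ _ _ |>.mp hf
    calc f a ^ r + ∑ i ∈ s, f i ^ r ≤ f a ^ r + (∑ i ∈ s, f i) ^ r := by gcongr; exact ih hs.2
      _ ≤ (f a + ∑ i ∈ s, f i) ^ r := add_rpow_le_rpow_add hs.1 (sum_nonneg hs.2) hr

end PowerSums

lemma rpow_sum_abs_rpow_le {ι : Type*} [Fintype ι] {p q : ℝ} (hp : 0 < p) (hpq : p ≤ q)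
    (y : ι → ℝ) : (∑ i, |y i| ^ q) ^ (p / q) ≤ ∑ i, |y i| ^ p := by
  have hq : 0 < q := hp.trans_le hpq
  have h := sum_rpow_le_rpow_sum univ (fun i _ => rpow_nonneg (abs_nonneg (y i)) p)
    ((one_le_div hp).mpr hpq)
  simp only [← rpow_mul (abs_nonneg _), mul_div_cancel₀ q hp.ne'] at h
  calc (∑ i, |y i| ^ q) ^ (p / q) ≤ ((∑ i, |y i| ^ p) ^ (q / p)) ^ (p / q) := by gcongr
    _ = ∑ i, |y i| ^ p := by
      rw [← rpow_mul (by positivity), div_mul_div_cancel₀ hp.ne', div_self hq.ne', rpow_one]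

lemma sum_abs_rpow_le_card_mul_of_sum_abs_rpow_le {ι : Type*} [Fintype ι] {p q C : ℝ} (hp : 0 < p)
    (hpq : p ≤ q) (hC : 0 ≤ C) {x y : ι → ℝ} (hxy : ∑ i, |x i| ^ q ≤ C * ∑ i, |y i| ^ q) :
    ∑ i, |x i| ^ p ≤ Fintype.card ι * C ^ (p / q) * ∑ i, |y i| ^ p := by
  have hq : 0 < q := hp.trans_le hpq
  calc ∑ i, |x i| ^ p = ∑ i, (|x i| ^ q) ^ (p / q) := by
        simp only [← rpow_mul (abs_nonneg _), mul_div_cancel₀ p hq.ne']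
    _ ≤ Fintype.card ι * (∑ i, |x i| ^ q) ^ (p / q) :=
        sum_rpow_le_card_mul_rpow_sum univ (fun i _ => by positivity) (by positivity)
    _ ≤ Fintype.card ι * (C * ∑ i, |y i| ^ q) ^ (p / q) := by gcongr
    _ = Fintype.card ι * C ^ (p / q) * (∑ i, |y i| ^ q) ^ (p / q) := by
        rw [mul_rpow hC (by positivity), mul_assoc]
    _ ≤ Fintype.card ι * C ^ (p / q) * ∑ i, |y i| ^ p := by
        gcongr; exact rpow_sum_abs_rpow_le hp hpq y

/-- Lemma B.7, BinarySearchSmall, case `p < q`. -/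
theorem stmt_9 :
    ∃ c : ℝ, 0 < c ∧
      ∀ (n m : ℕ) (p q : ℝ), 2 ≤ p → p < q →
        ∀ (C α : ℝ), 1 ≤ C → 1 < α →
          ∀ (A : Matrix (Fin n) (Fin m) ℝ) (b : Fin n → ℝ) (x₀ xs : Fin m → ℝ),
            A.mulVec x₀ = b →
            (∀ x, A.mulVec x = b → (∑ e, |x₀ e| ^ q) ≤ C * ∑ e, |x e| ^ q) →
            A.mulVec xs = b →
            (∀ x, A.mulVec x = b → (∑ e, |xs e| ^ p) ≤ ∑ e, |x e| ^ p) →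
            α * (∑ e, |xs e| ^ p) < (∑ e, |x₀ e| ^ p) →
            c * (α - 1) * (∑ e, |x₀ e| ^ p) / (C ^ (p / q) * p * (m : ℝ))
              ≤ sSup {y | ∃ Δ : Fin m → ℝ, A.mulVec Δ = 0 ∧
                  y = res (fun e => |x₀ e| ^ (p - 2) * x₀ e) (fun e => |x₀ e| ^ (p - 2)) p Δ} ∧
            sSup {y | ∃ Δ : Fin m → ℝ, A.mulVec Δ = 0 ∧
                  y = res (fun e => |x₀ e| ^ (p - 2) * x₀ e) (fun e => |x₀ e| ^ (p - 2)) p Δ}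
              ≤ ∑ e, |x₀ e| ^ p := by
  refine ⟨1 / 16, by norm_num, ?_⟩
  intro n m p q hp hpq C α hC hα A b x₀ xs hx₀ hx₀q hxs _ hgap
  set f₀ := ∑ e, |x₀ e| ^ p
  set fs := ∑ e, |xs e| ^ p
  have hfs : 0 ≤ fs := by positivity
  have hcomp : f₀ ≤ m * C ^ (p / q) * fs := by
    simpa using sum_abs_rpow_le_card_mul_of_sum_abs_rpow_le (by linarith) hpq.le (by linarith)
      (hx₀q xs hxs)
  have hf₀ : 0 < f₀ := by nlinarith
  have hfs₀ : 0 < fs := hfs.lt_of_ne fun h => by rw [← h, mul_zero] at hcomp; linarith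
  have hK : 0 < m * C ^ (p / q) := pos_of_mul_pos_left (hf₀.trans_le hcomp) hfs
  have hdrop : (α - 1) * f₀ ≤ m * C ^ (p / q) * (f₀ - fs) := by
    -- multiplied by `fs`, the difference of the two sides is
    -- `(m C^(p/q) fs - f₀) (f₀ - fs) + f₀ (f₀ - α fs) ≥ 0`
    refine le_of_mul_le_mul_left ?_ hfs₀
    nlinarith [mul_nonneg (sub_nonneg.mpr hcomp) (by nlinarith : 0 ≤ f₀ - fs),
      mul_nonneg hf₀.le (sub_nonneg.mpr hgap.le)]
  have hker : A.mulVec ((16 : ℝ)⁻¹ • (x₀ - xs)) = 0 := by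
    rw [Matrix.mulVec_smul, Matrix.mulVec_sub, hx₀, hxs, sub_self, smul_zero]
  set S := {y | ∃ Δ : Fin m → ℝ, A.mulVec Δ = 0 ∧
    y = res (fun e => |x₀ e| ^ (p - 2) * x₀ e) (fun e => |x₀ e| ^ (p - 2)) p Δ}
  have hbdd : ∀ y ∈ S, y ≤ f₀ := by
    rintro _ ⟨Δ, -, rfl⟩
    exact res_le_sum_abs_rpow hp x₀ Δ
  constructor
  · calc 1 / 16 * (α - 1) * f₀ / (C ^ (p / q) * p * m) ≤ (f₀ - fs) / (16 * p) := by
          rw [div_le_div_iff₀ (by nlinarith) (by positivity)]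
          nlinarith
      _ ≤ _ := sum_abs_rpow_sub_le_res hp x₀ xs
      _ ≤ _ := le_csSup ⟨f₀, hbdd⟩ ⟨_, hker, rfl⟩
  · exact Real.sSup_le hbdd (by positivity)
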